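/- arXiv:2605.00810 — 4 statements merged into one kernel-verified Lean document; each statement's English description precedes it below -/
import Mathlib

section
/- If $G$ is a group of nilpotency class at most $2$, then the nonabelian tensor square $G \otimes G$ is abelian. -/
def tensorSquareRels (G : Type*) [Group G] : Set (FreeGroup (G × G)) :=
  {r | ∃ g g' h : G,
      r = (FreeGroup.of (g * g', h))⁻¹ *
        (FreeGroup.of (g'⁻¹ * g * g', g'⁻¹ * h * g') * FreeGroup.of (g', h))} ∪
  {r | ∃ g h h' : G,
      r = (FreeGroup.of (g, h * h'))⁻¹ *
        (FreeGroup.of (g, h') * FreeGroup.of (h'⁻¹ * g * h', h'⁻¹ * h * h'))}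

def TensorSquare (G : Type*) [Group G] : Type _ :=
  PresentedGroup (tensorSquareRels G)

instance (G : Type*) [Group G] : Group (TensorSquare G) := by
  unfold TensorSquare; infer_instance

open scoped commutatorElement

/-! Expanding `ga ⊗ hb` once with the left relation first and once with the right relation first
gives `(g ⊗ h)^{ba} (a ⊗ b) = (a ⊗ b) (g ⊗ h)^{ab}`, where `(g ⊗ h)^c = g^c ⊗ h^c`. If `γ₃(G) = 1`
the commutator `[b, a]` is central, so conjugation by `ba` and by `ab` agree on `G`, and the
identity says that `a ⊗ b` commutes with every generator `g ⊗ h`. -/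

theorem conj_mul_comm_of_commutatorElement_eq_one {G : Type*} [Group G] {a b g : G}
    (h : ⁅⁅b, a⁆, g⁆ = 1) : (b * a)⁻¹ * g * (b * a) = (a * b)⁻¹ * g * (a * b) := by
  have hcomm := commutatorElement_eq_one_iff_mul_comm.mp h
  calc (b * a)⁻¹ * g * (b * a) = (a * b)⁻¹ * (⁅b, a⁆⁻¹ * (g * ⁅b, a⁆)) * (a * b) := by group
    _ = (a * b)⁻¹ * g * (a * b) := by rw [← hcomm]; group

namespace TensorSquare

variable {G : Type*} [Group G]

def tmul (g h : G) : TensorSquare G := PresentedGroup.of (rels := tensorSquareRels G) (g, h)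

theorem mul_tmul (g g' h : G) :
    tmul (g * g') h = tmul (g'⁻¹ * g * g') (g'⁻¹ * h * g') * tmul g' h :=
  (PresentedGroup.mk_eq_mk_of_inv_mul_mem (Or.inl ⟨g, g', h, rfl⟩)).trans (map_mul _ _ _)

theorem tmul_mul (g h h' : G) :
    tmul g (h * h') = tmul g h' * tmul (h'⁻¹ * g * h') (h'⁻¹ * h * h') :=
  (PresentedGroup.mk_eq_mk_of_inv_mul_mem (Or.inr ⟨g, h, h', rfl⟩)).trans (map_mul _ _ _)

theorem tmul_conj_mul_tmul (a b g h : G) :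
    tmul ((b * a)⁻¹ * g * (b * a)) ((b * a)⁻¹ * h * (b * a)) * tmul a b =
      tmul a b * tmul ((a * b)⁻¹ * g * (a * b)) ((a * b)⁻¹ * h * (a * b)) := by
  have expand_left_first : tmul (g * a) (h * b) =
      tmul (a⁻¹ * g * a) (a⁻¹ * b * a) *
        (tmul ((b * a)⁻¹ * g * (b * a)) ((b * a)⁻¹ * h * (b * a)) * tmul a b) *
        tmul (b⁻¹ * a * b) (b⁻¹ * h * b) := by
    rw [mul_tmul g a, tmul_mul a h b,
      show a⁻¹ * (h * b) * a = (a⁻¹ * h * a) * (a⁻¹ * b * a) by group,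
      tmul_mul (a⁻¹ * g * a) (a⁻¹ * h * a),
      show (a⁻¹ * b * a)⁻¹ * (a⁻¹ * g * a) * (a⁻¹ * b * a) = (b * a)⁻¹ * g * (b * a) by group,
      show (a⁻¹ * b * a)⁻¹ * (a⁻¹ * h * a) * (a⁻¹ * b * a) = (b * a)⁻¹ * h * (b * a) by group]
    group
  have expand_right_first : tmul (g * a) (h * b) =
      tmul (a⁻¹ * g * a) (a⁻¹ * b * a) *
        (tmul a b * tmul ((a * b)⁻¹ * g * (a * b)) ((a * b)⁻¹ * h * (a * b))) *
        tmul (b⁻¹ * a * b) (b⁻¹ * h * b) := by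
    rw [tmul_mul (g * a) h b, mul_tmul g a b,
      show b⁻¹ * (g * a) * b = (b⁻¹ * g * b) * (b⁻¹ * a * b) by group,
      mul_tmul (b⁻¹ * g * b) (b⁻¹ * a * b),
      show (b⁻¹ * a * b)⁻¹ * (b⁻¹ * g * b) * (b⁻¹ * a * b) = (a * b)⁻¹ * g * (a * b) by group,
      show (b⁻¹ * a * b)⁻¹ * (b⁻¹ * h * b) * (b⁻¹ * a * b) = (a * b)⁻¹ * h * (a * b) by group]
    group
  exact mul_left_cancel (mul_right_cancel (expand_left_first.symm.trans expand_right_first))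

theorem commute_tmul (hclass : ∀ a b c : G, ⁅⁅a, b⁆, c⁆ = 1) (a b g h : G) :
    Commute (tmul a b) (tmul g h) := by
  have key := tmul_conj_mul_tmul a b ((a * b) * g * (a * b)⁻¹) ((a * b) * h * (a * b)⁻¹)
  simp only [conj_mul_comm_of_commutatorElement_eq_one (hclass b a _)] at key
  simp only [show ∀ x : G, (a * b)⁻¹ * ((a * b) * x * (a * b)⁻¹) * (a * b) = x by intro; group]
    at key
  exact key.symm

end TensorSquare

/-- If `G` has nilpotency class at most `2` (`γ₃(G) = 1`), then the nonabelian tensor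
square `G ⊗ G` is abelian. -/
theorem tensorSquare_comm_of_class_two {G : Type*} [Group G]
    (hclass : ∀ a b c : G, ⁅⁅a, b⁆, c⁆ = 1) :
    ∀ x y : TensorSquare G, x * y = y * x := by
  intro x y
  set S := Set.range fun p : G × G => TensorSquare.tmul p.1 p.2
  have hS : ∀ u ∈ S, ∀ v ∈ S, u * v = v * u := by
    rintro _ ⟨⟨a, b⟩, rfl⟩ _ ⟨⟨g, h⟩, rfl⟩
    exact TensorSquare.commute_tmul hclass a b g h
  have hclosure : Subgroup.closure S = ⊤ := PresentedGroup.closure_range_of _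
  have hmem : ∀ z, z ∈ Set.centralizer (Set.centralizer S) := fun z =>
    Subgroup.closure_le_centralizer_centralizer S (hclosure ▸ Subgroup.mem_top z)
  exact Set.centralizer_centralizer_comm_of_comm hS x (hmem x) y (hmem y)
end

section
/- In Rocco's group $\nu(G)$ of a group $G$: (a) $[g,g^\phi]=1$ for all $g \in G'$; (b) $[g,g^\phi]$ is central in $\nu(G)$ for all $g \in G$; (c) $[g_1,g_2^\phi][g_2,g_1^\phi]$ is central in $\nu(G)$ for all $g_1,g_2 \in G$; (d) if $[g_1,g_2]=1$ in $G$ then $[g_1^n, g_2^\phi] = [g_1,g_2^\phi]^n = [g_1,(g_2^\phi)^n]$ for all integers $n$. -/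
open scoped commutatorElement

/-- Relators of Rocco's group `ν(G)`: the multiplication tables of the two copies of
`G` (generated by `Sum.inl g` and `Sum.inr g = g^φ`), together with the relations
`[g₁, g₂^φ]^{g₃} = [g₁^{g₃}, (g₂^{g₃})^φ] = [g₁, g₂^φ]^{g₃^φ}`. -/
def nuRels (G : Type*) [Group G] : Set (FreeGroup (G ⊕ G)) :=
  {r | ∃ g h : G, r = FreeGroup.of (Sum.inl g) * FreeGroup.of (Sum.inl h) *
      (FreeGroup.of (Sum.inl (g * h)))⁻¹} ∪
  {r | ∃ g h : G, r = FreeGroup.of (Sum.inr g) * FreeGroup.of (Sum.inr h) *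
      (FreeGroup.of (Sum.inr (g * h)))⁻¹} ∪
  {r | ∃ g₁ g₂ g₃ : G,
      r = ((FreeGroup.of (Sum.inl g₃))⁻¹ *
            ⁅FreeGroup.of (Sum.inl g₁ : G ⊕ G), FreeGroup.of (Sum.inr g₂)⁆ *
            FreeGroup.of (Sum.inl g₃))⁻¹ *
          ⁅FreeGroup.of (Sum.inl (g₃⁻¹ * g₁ * g₃) : G ⊕ G),
            FreeGroup.of (Sum.inr (g₃⁻¹ * g₂ * g₃))⁆} ∪
  {r | ∃ g₁ g₂ g₃ : G,
      r = ((FreeGroup.of (Sum.inr g₃))⁻¹ *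
            ⁅FreeGroup.of (Sum.inl g₁ : G ⊕ G), FreeGroup.of (Sum.inr g₂)⁆ *
            FreeGroup.of (Sum.inr g₃))⁻¹ *
          ⁅FreeGroup.of (Sum.inl (g₃⁻¹ * g₁ * g₃) : G ⊕ G),
            FreeGroup.of (Sum.inr (g₃⁻¹ * g₂ * g₃))⁆}

/-- Rocco's group `ν(G)`. -/
def Nu (G : Type*) [Group G] : Type _ := PresentedGroup (nuRels G)

instance (G : Type*) [Group G] : Group (Nu G) := by unfold Nu; infer_instance

/-- The first copy of `G` inside `ν(G)`. -/
def nuL {G : Type*} [Group G] (g : G) : Nu G := PresentedGroup.of (Sum.inl g)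

/-- The second copy `G^φ` inside `ν(G)`. -/
def nuR {G : Type*} [Group G] (g : G) : Nu G := PresentedGroup.of (Sum.inr g)

/-!
Write `c(g, h) = ⁅g, h^φ⁆`. The defining relations say that conjugation by `k` and by `k^φ`
act on the `c(g, h)` in the same way, diagonally. They make sense for any pair of
homomorphisms `L, R : G →* N` and are symmetric under swapping `L` and `R`, which halves the
work.

Expanding `c(g, k h)` in two ways gives the key identity `⁅c(g, h), k⁆ = c(⁅g, h⁆, k)`. With
`g = h` it shows that `κ(g) = c(g, g)` commutes with every `k` and hence every `k^φ`, which
is (b). For (c), conjugation by `c(a, b)` acts on the `c(u, v)` like conjugation by `⁅a, b⁆`.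
Then `κ` is a quadratic map, `κ(a b) = κ(b) κ(a) s(b, a)` with `s(b, a) = c(b, a) c(a, b)`
central, and both `κ(q)` and `s(q, ·)` are trivial for a commutator `q`; so the `w` with
`κ(a w) = κ(a)` for all `a` form a subgroup containing `G'`, which is (a). Part (d) is the
general fact that `⁅x ^ n, y⁆ = ⁅x, y⁆ ^ n` as soon as `⁅x, y⁆` commutes with `x`.
-/

section CommutatorPowers

variable {N : Type*} [Group N]

theorem commutatorElement_zpow_right_of_commute {a b : N} (hb : Commute ⁅a, b⁆ b) (n : ℤ) :
    ⁅a, b ^ n⁆ = ⁅a, b⁆ ^ n := by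
  have hconj : a * b * a⁻¹ = ⁅a, b⁆ * b := by group
  rw [commutatorElement_def, ← conj_zpow, hconj, hb.mul_zpow, mul_inv_cancel_right]

theorem commutatorElement_zpow_left_of_commute {a b : N} (ha : Commute ⁅a, b⁆ a) (n : ℤ) :
    ⁅a ^ n, b⁆ = ⁅a, b⁆ ^ n := by
  have ha' : Commute ⁅b, a⁆ a := by rw [← commutatorElement_inv]; exact ha.inv_left
  rw [← commutatorElement_inv, commutatorElement_zpow_right_of_commute ha', ← commutatorElement_inv,
    inv_zpow, inv_inv]

end CommutatorPowers

/-- The relations of `ν(G)` with conjugation written `k * x * k⁻¹`; the paper's `x^k = k⁻¹ x k`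
gives the same condition after `k ↦ k⁻¹`. -/
structure IsNuPair {G N : Type*} [Group G] [Group N] (L R : G →* N) : Prop where
  conj_left : ∀ g h k : G, L k * ⁅L g, R h⁆ * (L k)⁻¹ = ⁅L (k * g * k⁻¹), R (k * h * k⁻¹)⁆
  conj_right : ∀ g h k : G, R k * ⁅L g, R h⁆ * (R k)⁻¹ = ⁅L (k * g * k⁻¹), R (k * h * k⁻¹)⁆

namespace IsNuPair

variable {G N : Type*} [Group G] [Group N] {L R : G →* N}

theorem symm (hLR : IsNuPair L R) : IsNuPair R L where
  conj_left g h k := by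
    rw [← commutatorElement_inv, ← conj_inv, hLR.conj_right, commutatorElement_inv]
  conj_right g h k := by
    rw [← commutatorElement_inv, ← conj_inv, hLR.conj_left, commutatorElement_inv]

theorem conj_right_eq_conj_left (hLR : IsNuPair L R) (g h k : G) :
    R k * ⁅L g, R h⁆ * (R k)⁻¹ = L k * ⁅L g, R h⁆ * (L k)⁻¹ := by
  rw [hLR.conj_left, hLR.conj_right]

theorem commutator_mul_left (hLR : IsNuPair L R) (a b k : G) :
    ⁅L (a * b), R k⁆ = ⁅L (a * b * a⁻¹), R (a * k * a⁻¹)⁆ * ⁅L a, R k⁆ := by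
  rw [← hLR.conj_left, map_mul, commutatorElement_mul_left_eq_conj_mul]

theorem commutator_mul_right (hLR : IsNuPair L R) (g a b : G) :
    ⁅L g, R (a * b)⁆ = ⁅L g, R a⁆ * ⁅L (a * g * a⁻¹), R (a * b * a⁻¹)⁆ := by
  rw [← hLR.conj_right, map_mul, commutatorElement_mul_right_eq_mul_conj]
  simp only [mul_assoc]

theorem commutator_commutator_left (hLR : IsNuPair L R) (g h k : G) :
    ⁅⁅L g, R h⁆, L k⁆ = ⁅L ⁅g, h⁆, R k⁆ := by
  have hA : ⁅L ⁅g, h⁆, R k⁆ =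
      ⁅L (g * (h * g⁻¹ * h⁻¹) * g⁻¹), R (g * k * g⁻¹)⁆ * ⁅L g, R k⁆ := by
    rw [show ⁅g, h⁆ = g * (h * g⁻¹ * h⁻¹) by group, hLR.commutator_mul_left]
  have hB : ⁅L g, R (k * h)⁆ =
      ⁅L (g * (h * g⁻¹ * h⁻¹) * g⁻¹), R (g * k * g⁻¹)⁆⁻¹ * ⁅L g, R h⁆ := calc
    _ = (L g * (R h * ⁅L g⁻¹, R (h⁻¹ * k * h)⁆ * (R h)⁻¹) * (L g)⁻¹)⁻¹ * ⁅L g, R h⁆ := by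
      simp only [map_mul, map_inv, commutatorElement_def]
      group
    _ = _ := by
      rw [hLR.conj_right, hLR.conj_left]
      group
  calc ⁅⁅L g, R h⁆, L k⁆ = ⁅L g, R h⁆ * (L k * ⁅L g, R h⁆ * (L k)⁻¹)⁻¹ := by group
    _ = ⁅L g, R h⁆ * (⁅L g, R k⁆⁻¹ * ⁅L g, R (k * h)⁆)⁻¹ := by
      rw [hLR.conj_left, hLR.commutator_mul_right g k h, inv_mul_cancel_left]
    _ = ⁅L ⁅g, h⁆, R k⁆ := by rw [hB, hA]; group

theorem conj_commutator (hLR : IsNuPair L R) (a b u v : G) :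
    ⁅L a, R b⁆ * ⁅L u, R v⁆ * ⁅L a, R b⁆⁻¹ =
      ⁅L (⁅a, b⁆ * u * ⁅a, b⁆⁻¹), R (⁅a, b⁆ * v * ⁅a, b⁆⁻¹)⁆ := calc
  _ = L a * (R b * (L a⁻¹ * (R b⁻¹ * ⁅L u, R v⁆ * (R b⁻¹)⁻¹) * (L a⁻¹)⁻¹) * (R b)⁻¹) *
        (L a)⁻¹ := by
    simp only [map_inv, commutatorElement_def]
    group
  _ = _ := by
    rw [hLR.conj_right, hLR.conj_left, hLR.conj_right, hLR.conj_left]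
    group

theorem commutator_inv_left_conj (hLR : IsNuPair L R) (a z : G) :
    ⁅L a⁻¹, R (a * z * a⁻¹)⁆ = ⁅L a, R z⁆⁻¹ := by
  have h := hLR.commutator_mul_left a a⁻¹ z
  rw [mul_inv_cancel, one_mul, map_one, commutatorElement_one_left] at h
  exact eq_inv_of_mul_eq_one_left h.symm

theorem conj_left_commutator (hLR : IsNuPair L R) (g h k : G) :
    L k * ⁅L g, R h⁆ * (L k)⁻¹ = ⁅L ⁅g, h⁆, R k⁆⁻¹ * ⁅L g, R h⁆ := by
  rw [← hLR.commutator_commutator_left]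
  group

theorem mem_center_of_conj_eq (hgen : Subgroup.closure (Set.range L ∪ Set.range R) = ⊤) {z : N}
    (hL : ∀ k, L k * z * (L k)⁻¹ = z) (hR : ∀ k, R k * z * (R k)⁻¹ = z) :
    z ∈ Subgroup.center N := by
  rw [← Subgroup.centralizer_univ, ← Subgroup.coe_top, ← hgen, Subgroup.centralizer_closure,
    Subgroup.mem_centralizer_iff]
  rintro _ (⟨k, rfl⟩ | ⟨k, rfl⟩)
  · exact mul_inv_eq_iff_eq_mul.mp (hL k)
  · exact mul_inv_eq_iff_eq_mul.mp (hR k)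

theorem commutator_self_mem_center (hLR : IsNuPair L R)
    (hgen : Subgroup.closure (Set.range L ∪ Set.range R) = ⊤) (g : G) :
    ⁅L g, R g⁆ ∈ Subgroup.center N := by
  have hL : ∀ k, L k * ⁅L g, R g⁆ * (L k)⁻¹ = ⁅L g, R g⁆ := fun k => by
    rw [hLR.conj_left_commutator, commutatorElement_self, map_one, commutatorElement_one_left,
      inv_one, one_mul]
  exact mem_center_of_conj_eq hgen hL fun k => by rw [hLR.conj_right_eq_conj_left, hL]

theorem commutator_mul_commutator_swap_mem_center (hLR : IsNuPair L R)
    (hgen : Subgroup.closure (Set.range L ∪ Set.range R) = ⊤) (a b : G) :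
    ⁅L a, R b⁆ * ⁅L b, R a⁆ ∈ Subgroup.center N := by
  have hswap : ∀ k, ⁅L a, R b⁆ * ⁅L ⁅b, a⁆, R k⁆⁻¹ * ⁅L a, R b⁆⁻¹ = ⁅L ⁅a, b⁆, R k⁆ := fun k => by
    rw [← conj_inv, hLR.conj_commutator, ← commutatorElement_inv a b, mul_inv_cancel, one_mul,
      hLR.commutator_inv_left_conj, inv_inv]
  have hL : ∀ k, L k * (⁅L a, R b⁆ * ⁅L b, R a⁆) * (L k)⁻¹ = ⁅L a, R b⁆ * ⁅L b, R a⁆ :=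
    fun k => calc
    _ = ⁅L ⁅a, b⁆, R k⁆⁻¹ * ⁅L a, R b⁆ * (⁅L ⁅b, a⁆, R k⁆⁻¹ * ⁅L b, R a⁆) := by
      rw [← conj_mul, hLR.conj_left_commutator, hLR.conj_left_commutator]
    _ = ⁅L ⁅a, b⁆, R k⁆⁻¹ * (⁅L a, R b⁆ * ⁅L ⁅b, a⁆, R k⁆⁻¹ * ⁅L a, R b⁆⁻¹) *
          (⁅L a, R b⁆ * ⁅L b, R a⁆) := by group
    _ = _ := by rw [hswap, inv_mul_cancel, one_mul]
  refine mem_center_of_conj_eq hgen hL fun k => ?_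
  rw [← conj_mul, hLR.conj_right_eq_conj_left, hLR.conj_right_eq_conj_left, conj_mul, hL]

theorem commutator_self_mul (hLR : IsNuPair L R)
    (hgen : Subgroup.closure (Set.range L ∪ Set.range R) = ⊤) (a b : G) :
    ⁅L (a * b), R (a * b)⁆ = ⁅L b, R b⁆ * ⁅L a, R a⁆ * (⁅L b, R a⁆ * ⁅L a, R b⁆) := by
  have hκa := hLR.commutator_self_mem_center hgen a
  have hκb := hLR.commutator_self_mem_center hgen b
  have hκ := Subgroup.mul_mem _ hκb hκa
  have hs := hLR.commutator_mul_commutator_swap_mem_center hgen b a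
  have conj_eq {z : N} (hz : z ∈ Subgroup.center N) (x : N) : x * z * x⁻¹ = z :=
    Commute.mul_inv_cancel (Subgroup.mem_center_iff.mp hz x)
  calc ⁅L (a * b), R (a * b)⁆
      = L a * (⁅L b, R a⁆ * (R a * ⁅L b, R b⁆ * (R a)⁻¹)) * (L a)⁻¹ *
          (⁅L a, R a⁆ * (R a * ⁅L a, R b⁆ * (R a)⁻¹)) := by
        simp only [map_mul, commutatorElement_def]
        group
    _ = L a * ⁅L b, R a⁆ * (L a)⁻¹ * (L a * ⁅L b, R b⁆ * (L a)⁻¹ * ⁅L a, R a⁆) *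
          (L a * ⁅L a, R b⁆ * (L a)⁻¹) := by
        rw [conj_eq hκb (R a), hLR.conj_right_eq_conj_left]
        group
    _ = ⁅L b, R b⁆ * ⁅L a, R a⁆ * (⁅L b, R a⁆ * ⁅L a, R b⁆) := by
        rw [conj_eq hκb, Subgroup.mem_center_iff.mp hκ, mul_assoc, conj_mul, conj_eq hs]

theorem commutator_self_commutator_eq_one (hLR : IsNuPair L R) (g h : G) :
    ⁅L ⁅g, h⁆, R ⁅g, h⁆⁆ = 1 := by
  have hfix : L ⁅g, h⁆ * ⁅L g, R h⁆ * (L ⁅g, h⁆)⁻¹ = ⁅L g, R h⁆ := by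
    rw [hLR.conj_left, ← hLR.conj_commutator, mul_inv_cancel_right]
  rw [← hLR.commutator_commutator_left, commutatorElement_eq_one_iff_mul_comm,
    ← mul_inv_eq_iff_eq_mul.mp hfix]

theorem commutator_mul_commutator_swap_commutator_eq_one (hLR : IsNuPair L R)
    (hgen : Subgroup.closure (Set.range L ∪ Set.range R) = ⊤) (g h k : G) :
    ⁅L ⁅g, h⁆, R k⁆ * ⁅L k, R ⁅g, h⁆⁆ = 1 := by
  have hs := hLR.commutator_mul_commutator_swap_mem_center hgen h g
  have hmirror : ⁅L k, R ⁅g, h⁆⁆ = R k * ⁅L h, R g⁆⁻¹ * (R k)⁻¹ * ⁅L h, R g⁆ := by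
    rw [← commutatorElement_inv (R ⁅g, h⁆), ← hLR.symm.commutator_commutator_left,
      ← commutatorElement_inv (R g)]
    group
  calc _ = ⁅L g, R h⁆ * (L k * (⁅L h, R g⁆ * ⁅L g, R h⁆) * (L k)⁻¹)⁻¹ * ⁅L h, R g⁆ := by
        rw [← hLR.commutator_commutator_left, hmirror, ← conj_inv,
          hLR.conj_right_eq_conj_left]
        group
    _ = 1 := by
        rw [Commute.mul_inv_cancel (Subgroup.mem_center_iff.mp hs _)]
        group

theorem commutator_self_eq_one_of_mem_commutator (hLR : IsNuPair L R)
    (hgen : Subgroup.closure (Set.range L ∪ Set.range R) = ⊤) {w : G} (hw : w ∈ commutator G) :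
    ⁅L w, R w⁆ = 1 := by
  suffices h : ∀ a, ⁅L (a * w), R (a * w)⁆ = ⁅L a, R a⁆ by simpa using h 1
  rw [commutator_eq_closure] at hw
  induction hw using Subgroup.closure_induction with
  | mem _ hq =>
    obtain ⟨g, h, rfl⟩ := hq
    intro a
    rw [hLR.commutator_self_mul hgen, hLR.commutator_self_commutator_eq_one, one_mul,
      hLR.commutator_mul_commutator_swap_commutator_eq_one hgen, mul_one]
  | one => simp
  | mul x y _ _ hx hy => intro a; rw [← mul_assoc, hy, hx]
  | inv x _ hx => intro a; rw [← hx (a * x⁻¹), inv_mul_cancel_right]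

theorem commute_commutator_left_of_commute (hLR : IsNuPair L R) {g₁ g₂ : G}
    (hc : Commute g₁ g₂) : Commute ⁅L g₁, R g₂⁆ (L g₁) := by
  refine (mul_inv_eq_iff_eq_mul.mp ?_).symm
  rw [hLR.conj_left, mul_inv_cancel_right, hc.mul_inv_cancel]

theorem commutator_zpow_left_of_commute (hLR : IsNuPair L R) {g₁ g₂ : G} (hc : Commute g₁ g₂)
    (n : ℤ) : ⁅L g₁ ^ n, R g₂⁆ = ⁅L g₁, R g₂⁆ ^ n :=
  commutatorElement_zpow_left_of_commute (hLR.commute_commutator_left_of_commute hc) n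

theorem commutator_zpow_right_of_commute (hLR : IsNuPair L R) {g₁ g₂ : G} (hc : Commute g₁ g₂)
    (n : ℤ) : ⁅L g₁, R g₂ ^ n⁆ = ⁅L g₁, R g₂⁆ ^ n := by
  refine commutatorElement_zpow_right_of_commute ?_ n
  have h := hLR.symm.commute_commutator_left_of_commute hc.symm
  rw [← commutatorElement_inv] at h
  exact Commute.inv_left_iff.mp h

end IsNuPair

section Nu

variable {G : Type*} [Group G]

theorem nuL_mul (g h : G) : nuL (g * h) = nuL g * nuL h :=
  (PresentedGroup.mk_eq_mk_of_mul_inv_mem (rels := nuRels G)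
    (Or.inl (Or.inl (Or.inl ⟨g, h, rfl⟩)))).symm

theorem nuR_mul (g h : G) : nuR (g * h) = nuR g * nuR h :=
  (PresentedGroup.mk_eq_mk_of_mul_inv_mem (rels := nuRels G)
    (Or.inl (Or.inl (Or.inr ⟨g, h, rfl⟩)))).symm

def nuLHom : G →* Nu G := MonoidHom.mk' nuL nuL_mul

def nuRHom : G →* Nu G := MonoidHom.mk' nuR nuR_mul

theorem isNuPair_nu : IsNuPair (nuLHom (G := G)) nuRHom where
  conj_left g h k := by
    have hrel : (nuLHom k⁻¹)⁻¹ * ⁅nuLHom g, nuRHom h⁆ * nuLHom k⁻¹ =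
        ⁅nuLHom (k⁻¹⁻¹ * g * k⁻¹), nuRHom (k⁻¹⁻¹ * h * k⁻¹)⁆ := by
      have := PresentedGroup.mk_eq_mk_of_inv_mul_mem (rels := nuRels G)
        (Or.inl (Or.inr ⟨g, h, k⁻¹, rfl⟩))
      simp only [map_mul, map_inv, map_commutatorElement] at this
      exact this
    rwa [map_inv, inv_inv, inv_inv] at hrel
  conj_right g h k := by
    have hrel : (nuRHom k⁻¹)⁻¹ * ⁅nuLHom g, nuRHom h⁆ * nuRHom k⁻¹ =
        ⁅nuLHom (k⁻¹⁻¹ * g * k⁻¹), nuRHom (k⁻¹⁻¹ * h * k⁻¹)⁆ := by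
      have := PresentedGroup.mk_eq_mk_of_inv_mul_mem (rels := nuRels G)
        (Or.inr ⟨g, h, k⁻¹, rfl⟩)
      simp only [map_mul, map_inv, map_commutatorElement] at this
      exact this
    rwa [map_inv, inv_inv, inv_inv] at hrel

theorem closure_range_nuLHom_union_range_nuRHom :
    Subgroup.closure (Set.range (nuLHom (G := G)) ∪ Set.range nuRHom) = ⊤ := by
  have hrange : Set.range (nuLHom (G := G)) ∪ Set.range nuRHom =
      (Set.range (PresentedGroup.of (rels := nuRels G)) : Set (Nu G)) := by
    ext x
    exact (Sum.exists (p := fun y => PresentedGroup.of y = x)).symm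
  rw [hrange]
  exact PresentedGroup.closure_range_of _

end Nu

/-- Basic relations in Rocco's group `ν(G)`:
(a) `[g, g^φ] = 1` for `g ∈ G'`;
(b) `[g, g^φ]` is central in `ν(G)`;
(c) `[g₁, g₂^φ][g₂, g₁^φ]` is central in `ν(G)`;
(d) if `[g₁, g₂] = 1` then `[g₁ⁿ, g₂^φ] = [g₁, g₂^φ]ⁿ = [g₁, (g₂^φ)ⁿ]` for all `n : ℤ`. -/
theorem nu_relations (G : Type*) [Group G] :
    (∀ g ∈ commutator G, ⁅nuL g, nuR g⁆ = 1) ∧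
    (∀ g : G, ⁅nuL g, nuR g⁆ ∈ Subgroup.center (Nu G)) ∧
    (∀ g₁ g₂ : G, ⁅nuL g₁, nuR g₂⁆ * ⁅nuL g₂, nuR g₁⁆ ∈ Subgroup.center (Nu G)) ∧
    (∀ g₁ g₂ : G, ⁅g₁, g₂⁆ = 1 → ∀ n : ℤ,
      ⁅nuL g₁ ^ n, nuR g₂⁆ = ⁅nuL g₁, nuR g₂⁆ ^ n ∧
      ⁅nuL g₁, nuR g₂⁆ ^ n = ⁅nuL g₁, (nuR g₂) ^ n⁆) := by
  have hgen := closure_range_nuLHom_union_range_nuRHom (G := G)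
  refine ⟨fun g hg => isNuPair_nu.commutator_self_eq_one_of_mem_commutator hgen hg,
    isNuPair_nu.commutator_self_mem_center hgen,
    isNuPair_nu.commutator_mul_commutator_swap_mem_center hgen, fun g₁ g₂ hc n => ?_⟩
  have hc' := commutatorElement_eq_one_iff_commute.mp hc
  exact ⟨isNuPair_nu.commutator_zpow_left_of_commute hc' n,
    (isNuPair_nu.commutator_zpow_right_of_commute hc' n).symm⟩
end

section
/- Let $A$ be an $n \times n$ matrix over a commutative ring $R$. The homogeneous linear system $Ax = 0$ has a nontrivial solution $x \in R^n$ (i.e., $x \neq 0$) if and only if $\det(A)$ is a zero divisor in $R$ (where $0$ counts as a zero divisor if $R$ is nontrivial). -/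
open Matrix Function

private lemma mccoy_aux {R : Type*} [CommRing R] {n : Type*} [Fintype n] [DecidableEq n]
    (A : Matrix n n R) {s : R} (hs : s ≠ 0) (hds : A.det * s = 0) :
    ∃ x : n → R, x ≠ 0 ∧ A.mulVec x = 0 := by
  classical
  set m := Fintype.card n with hm
  set P : ℕ → Prop := fun r => ∃ f g : Fin r ↪ n, s * (A.submatrix f g).det ≠ 0 with hP
  have hP0 : P 0 := by
    refine ⟨⟨Fin.elim0, fun a => a.elim0⟩, ⟨Fin.elim0, fun a => a.elim0⟩, ?_⟩
    simpa [Matrix.det_fin_zero] using hs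
  have hPm : ¬ P m := by
    rintro ⟨f, g, hfg⟩
    have hfb : Function.Bijective f :=
      (Fintype.bijective_iff_injective_and_card f).mpr ⟨f.injective, by simp [hm]⟩
    have hgb : Function.Bijective g :=
      (Fintype.bijective_iff_injective_and_card g).mpr ⟨g.injective, by simp [hm]⟩
    set ef := Equiv.ofBijective f hfb
    set eg := Equiv.ofBijective g hgb
    set σ : Equiv.Perm (Fin m) := ef.trans eg.symm
    have heq : A.submatrix f g = (A.submatrix eg eg).submatrix σ id := by
      ext i j
      show A (f i) (g j) = A (eg (eg.symm (ef i))) (eg j)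
      rw [Equiv.apply_symm_apply]
      rfl
    rw [heq, Matrix.det_permute, Matrix.det_submatrix_equiv_self] at hfg
    apply hfg
    calc s * ((Equiv.Perm.sign σ : ℤ) * A.det)
        = (Equiv.Perm.sign σ : ℤ) * (A.det * s) := by ring
      _ = 0 := by rw [hds, mul_zero]
  letI : DecidablePred P := fun r => Classical.dec _
  set r := Nat.findGreatest P m with hr
  have hPr : P r := Nat.findGreatest_spec (Nat.zero_le m) hP0
  have hrm : r < m := by
    rcases lt_or_eq_of_le (Nat.findGreatest_le (P := P) m) with h | h
    · exact h
    · exact absurd (h ▸ hPr) hPm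
  have hPr1 : ¬ P (r + 1) := Nat.findGreatest_is_greatest (n := m) (k := r + 1)
    (by rw [← hr]; omega) (by omega)
  obtain ⟨f, g, hfg⟩ := hPr
  have : ∃ c : n, c ∉ Set.range g := by
    by_contra h
    push_neg at h
    have hsurj : Function.Surjective g := h
    have := Fintype.card_le_of_surjective g hsurj
    simp only [Fintype.card_fin] at this
    omega
  obtain ⟨c, hc⟩ := this
  set g' : Fin (r + 1) → n := Fin.cons c g with hg'
  have hg'inj : Function.Injective g' :=
    Fin.cons_injective_iff.mpr ⟨hc, g.injective⟩
  set x : n → R := fun j =>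
    ∑ k : Fin (r + 1), if g' k = j then
      (-1) ^ (k : ℕ) * (s * (A.submatrix f (g' ∘ k.succAbove)).det) else 0 with hx
  have hxc : x c = s * (A.submatrix f g).det := by
    simp only [hx]
    rw [Finset.sum_eq_single (0 : Fin (r+1))]
    · have h0 : g' 0 = c := by simp [hg']
      rw [if_pos h0]
      have hcomp : g' ∘ (0 : Fin (r+1)).succAbove = g := by
        ext k
        simp [hg', Fin.zero_succAbove]
      rw [hcomp]
      simp
    · intro b _ hb
      rw [if_neg]
      intro h
      exact hb (hg'inj (h.trans (by simp [hg'])))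
    · simp
  have hx0 : x ≠ 0 := by
    intro h
    rw [h] at hxc
    exact hfg hxc.symm
  refine ⟨x, hx0, ?_⟩
  funext i
  have key : A.mulVec x i = s * (A.submatrix (Fin.cons i f) g').det := by
    have lhs : A.mulVec x i = ∑ j, A i j * x j := rfl
    rw [lhs, Matrix.det_succ_row_zero, Finset.mul_sum]
    simp only [hx, Finset.mul_sum, mul_ite, mul_zero]
    rw [Finset.sum_comm]
    refine Finset.sum_congr rfl fun k _ => ?_
    rw [Finset.sum_eq_single (g' k)]
    · rw [if_pos rfl]
      have h1 : (A.submatrix (Fin.cons i f) g') 0 k = A i (g' k) := by simp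
      have h2 : (A.submatrix (Fin.cons i f) g').submatrix Fin.succ k.succAbove
          = A.submatrix f (g' ∘ k.succAbove) := by
        ext a b; simp
      rw [h1, h2]; ring
    · intro b _ hb; rw [if_neg (Ne.symm hb)]
    · simp
  rw [key]
  simp only [Pi.zero_apply]
  by_cases hi : i ∈ Set.range f
  · obtain ⟨t, ht⟩ := hi
    have hdet : (A.submatrix (Fin.cons i f) g').det = 0 := by
      apply Matrix.det_zero_of_row_eq (i := (0 : Fin (r+1))) (j := t.succ)
        (Fin.succ_ne_zero t).symm
      funext j
      simp [ht]
    rw [hdet, mul_zero]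
  · have hfinj : Function.Injective (Fin.cons i f : Fin (r+1) → n) :=
      Fin.cons_injective_iff.mpr ⟨hi, f.injective⟩
    by_contra hne
    exact hPr1 ⟨⟨_, hfinj⟩, ⟨g', hg'inj⟩, hne⟩

/-- McCoy's theorem: for an `n × n` matrix `A` over a commutative ring `R`, the system
`A x = 0` has a nontrivial solution iff `det A` is a zero divisor in `R` (where `0`
counts as a zero divisor when `R` is nontrivial, which is exactly the condition
`∃ s ≠ 0, det A * s = 0`). -/
theorem mccoy {R : Type*} [CommRing R] {n : Type*} [Fintype n] [DecidableEq n]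
    (A : Matrix n n R) :
    (∃ x : n → R, x ≠ 0 ∧ A.mulVec x = 0) ↔ ∃ s : R, s ≠ 0 ∧ A.det * s = 0 := by
  constructor
  · rintro ⟨x, hx, hAx⟩
    obtain ⟨i, hi⟩ := Function.ne_iff.mp hx
    refine ⟨x i, hi, ?_⟩
    have h1 : A.adjugate.mulVec (A.mulVec x) = 0 := by rw [hAx, Matrix.mulVec_zero]
    rw [Matrix.mulVec_mulVec, Matrix.adjugate_mul, Matrix.smul_mulVec,
      Matrix.one_mulVec] at h1
    have := congrFun h1 i
    simpa using this
  · rintro ⟨s, hs, hds⟩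
    exact mccoy_aux A hs hds
end

section
/- Let $p$ be odd and $G$ an $s$-extraspecial $p$-group of order $p^{(2r+1)s}$ with $r \ge 2$. Then $G$ is unicentral, i.e., the epicenter of $G$ equals its center; consequently $G$ is not capable. -/
universe u

/-- A group is capable if it is `E/Z(E)` for some group `E`. -/
def IsCapable (H : Type u) [Group H] : Prop :=
  ∃ (E : Type u) (instE : Group E),
    letI := instE
    Nonempty (H ≃* E ⧸ Subgroup.center E)

/-- The epicenter `Z^*(G)`: the smallest central subgroup `Z` with `G/Z` capable. -/
def epicenter (G : Type u) [Group G] : Subgroup G :=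
  sInf {Z : Subgroup G | ∃ hn : Z.Normal, Z ≤ Subgroup.center G ∧
    (letI := hn; IsCapable (G ⧸ Z))}

/-- A finite `p`-group `G` is `s`-extraspecial if `G' = Z(G)` is cyclic of order `p^s`
and `G/G'` is homocyclic of exponent `p^s`. -/
def IsSExtraspecial (p s : ℕ) (G : Type u) [Group G] : Prop :=
  commutator G = Subgroup.center G ∧ IsCyclic ↥(commutator G) ∧
    Nat.card ↥(commutator G) = p ^ s ∧
    ∃ k : ℕ, Nonempty (Abelianization G ≃* Multiplicative (Fin k → ZMod (p ^ s)))

/-!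
In a group whose commutator subgroup is central, `(x, y) ↦ ⁅x, y⁆` is biadditive. For `G`
`s`-extraspecial it becomes a pairing on `G/G' ≅ (ℤ/p^s)^(2r)` with values in `G' ≅ ℤ/p^s`,
given by an invertible matrix because `Z(G) = G'`. Divisibility in `ℤ/p^s` is total, and with
`2r ≥ 3` coordinates this lets one find, for every `y` and every target value, two vectors
orthogonal to `y` pairing to that value: every `z ∈ Z(G)` is a commutator `⁅a, b⁆` of elements
centralizing `y`, whatever `y` is.

Such a `z` dies in every capable quotient `G/Z = E/Z(E)`: lifts of `a` and `b` commute with a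
lift `e` of `y` modulo `Z(E)`, so by the three subgroups lemma their commutator commutes with `e`,
and `z` lifts to a central element of `E`. Hence `Z(G) ≤ Z` whenever `G/Z` is capable, and `G`
itself, having nontrivial centre, is not capable.
-/

open Matrix Subgroup
open scoped commutatorElement

theorem PreValuationRing.of_surjective {R S : Type*} [CommRing R] [CommRing S] [PreValuationRing R]
    (f : R →+* S) (hf : Function.Surjective f) : PreValuationRing S := by
  refine PreValuationRing.iff_dvd_total.mpr ⟨fun a b => ?_⟩
  obtain ⟨a, rfl⟩ := hf a
  obtain ⟨b, rfl⟩ := hf b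
  exact (ValuationRing.dvd_total a b).imp (map_dvd f) (map_dvd f)

instance ZMod.preValuationRing_pow (p n : ℕ) [Fact p.Prime] : PreValuationRing (ZMod (p ^ n)) :=
  .of_surjective (PadicInt.toZModPow n) (ZMod.ringHom_surjective _)

section DotProduct

variable {R ι : Type*} [CommRing R] [Fintype ι] [DecidableEq ι]

theorem exists_dotProduct_eq_zero_of_dvd {i j m : ι} (hij : i ≠ j) (him : i ≠ m)
    (hjm : j ≠ m) {w y : ι → R} (hw : w j ∣ w i) (hy : y m ∣ y i) :
    ∃ a c : ι → R, a ⬝ᵥ w = 0 ∧ c ⬝ᵥ y = 0 ∧ a ⬝ᵥ c = 1 := by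
  obtain ⟨d, hd⟩ := hw
  obtain ⟨t, ht⟩ := hy
  refine ⟨Pi.single i 1 - Pi.single j d, Pi.single i 1 - Pi.single m t, ?_, ?_, ?_⟩
  · simp [sub_dotProduct, single_dotProduct, hd, mul_comm]
  · simp [sub_dotProduct, single_dotProduct, ht, mul_comm]
  · simp [dotProduct_sub, hij, him.symm, hjm.symm]

variable [PreValuationRing R]

theorem exists_dotProduct_eq_zero_of_dvd_of_dvd {i j m : ι} (hij : i ≠ j) (him : i ≠ m)
    (hjm : j ≠ m) {w y : ι → R} (hi : y m ∣ y i) (hj : y m ∣ y j) :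
    ∃ a c : ι → R, a ⬝ᵥ w = 0 ∧ c ⬝ᵥ y = 0 ∧ a ⬝ᵥ c = 1 := by
  rcases ValuationRing.dvd_total (w j) (w i) with hw | hw
  · exact exists_dotProduct_eq_zero_of_dvd hij him hjm hw hi
  · exact exists_dotProduct_eq_zero_of_dvd hij.symm hjm him hw hj

theorem exists_dotProduct_eq_zero_dotProduct_eq_one (hι : 2 < Fintype.card ι) (w y : ι → R) :
    ∃ a c : ι → R, a ⬝ᵥ w = 0 ∧ c ⬝ᵥ y = 0 ∧ a ⬝ᵥ c = 1 := by
  obtain ⟨i, j, m, hij, him, hjm⟩ := Fintype.two_lt_card_iff.mp hι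
  wlog hy : y i ∣ y j generalizing i j
  · exact this j i hij.symm hjm him ((ValuationRing.dvd_total _ _).resolve_left hy)
  rcases ValuationRing.dvd_total (y i) (y m) with hm | hm
  · exact exists_dotProduct_eq_zero_of_dvd_of_dvd hjm hij.symm him.symm hy hm
  · exact exists_dotProduct_eq_zero_of_dvd_of_dvd hij him hjm hm (hm.trans hy)

theorem Matrix.exists_dotProduct_mulVec_eq (hι : 2 < Fintype.card ι) {M : Matrix ι ι R}
    (hM : IsUnit M) (y : ι → R) (z : R) :
    ∃ u v : ι → R,
      u ⬝ᵥ M *ᵥ y = 0 ∧ v ⬝ᵥ M *ᵥ y = 0 ∧ u ⬝ᵥ M *ᵥ v = z := by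
  obtain ⟨a, c, ha, hc, hac⟩ :=
    exists_dotProduct_eq_zero_dotProduct_eq_one hι (M *ᵥ y) ((M *ᵥ y) ᵥ* M⁻¹)
  have hMM : M * M⁻¹ = 1 := M.mul_nonsing_inv ((M.isUnit_iff_isUnit_det).mp hM)
  refine ⟨z • a, M⁻¹ *ᵥ c, ?_, ?_, ?_⟩
  · rw [smul_dotProduct, ha, smul_zero]
  · rw [dotProduct_comm, dotProduct_mulVec, dotProduct_comm, hc]
  · rw [mulVec_mulVec, hMM, one_mulVec, smul_dotProduct, hac, smul_eq_mul, mul_one]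

end DotProduct

def IsCommutatorInCentralizers {H : Type*} [Group H] (z : H) : Prop :=
  ∀ y : H, ∃ a b : H, Commute a y ∧ Commute b y ∧ ⁅a, b⁆ = z

theorem IsCommutatorInCentralizers.map {G H : Type*} [Group G] [Group H] {z : G}
    (hz : IsCommutatorInCentralizers z) (f : G →* H) (hf : Function.Surjective f) :
    IsCommutatorInCentralizers (f z) := by
  intro y
  obtain ⟨y, rfl⟩ := hf y
  obtain ⟨a, b, ha, hb, rfl⟩ := hz y
  exact ⟨f a, f b, ha.map f, hb.map f, (map_commutatorElement f a b).symm⟩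

section Capable

variable {E : Type*} [Group E]

theorem Subgroup.commutator_le_centralizer_of_commutator_le_center {H K : Subgroup E}
    (h : ⁅H, K⁆ ≤ center E) : ⁅H, H⁆ ≤ centralizer K := by
  have hHKH : ⁅⁅H, K⁆, H⁆ = ⊥ := eq_bot_iff.mpr <| (commutator_mono h le_rfl).trans
    (commutator_eq_bot_iff_le_centralizer.mpr (center_le_centralizer (H : Set E))).le
  rw [← commutator_eq_bot_iff_le_centralizer]
  exact commutator_commutator_eq_bot_of_rotate hHKH (by rwa [commutator_comm K H])

theorem commutator_comap_centralizer_zpowers_le_center (e : E) :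
    ⁅(centralizer {(e : E ⧸ center E)}).comap (QuotientGroup.mk' (center E)), zpowers e⁆ ≤
      center E := by
  rw [commutator_le]
  rintro k hk _ ⟨m, rfl⟩
  rw [← QuotientGroup.eq_one_iff, ← QuotientGroup.mk'_apply, map_commutatorElement, map_zpow,
    commutatorElement_eq_one_iff_commute]
  exact (show Commute _ _ from mem_centralizer_singleton_iff.mp (mem_comap.mp hk)).zpow_right m

theorem eq_one_of_isCommutatorInCentralizers_quotient_center {z : E ⧸ center E}
    (hz : IsCommutatorInCentralizers z) : z = 1 := by
  obtain ⟨z, rfl⟩ := QuotientGroup.mk_surjective z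
  rw [QuotientGroup.eq_one_iff, mem_center_iff]
  intro e
  obtain ⟨a, b, ha, hb, hab⟩ := hz e
  obtain ⟨a, rfl⟩ := QuotientGroup.mk_surjective a
  obtain ⟨b, rfl⟩ := QuotientGroup.mk_surjective b
  have hcomm : Commute ⁅a, b⁆ e := by
    have := commutator_le_centralizer_of_commutator_le_center
      (commutator_comap_centralizer_zpowers_le_center e)
      (commutator_mem_commutator (mem_comap.mpr (mem_centralizer_singleton_iff.mpr ha.eq))
        (mem_comap.mpr (mem_centralizer_singleton_iff.mpr hb.eq)))
    exact (mem_centralizer_iff.mp this e (mem_zpowers e)).symm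
  have hd : ⁅a, b⁆⁻¹ * z ∈ center E := QuotientGroup.eq.mp hab
  have hz : Commute (⁅a, b⁆ * (⁅a, b⁆⁻¹ * z)) e :=
    hcomm.mul_left (mem_center_iff.mp hd e).symm
  rw [mul_inv_cancel_left] at hz
  exact hz.eq.symm

theorem IsCapable.eq_one_of_isCommutatorInCentralizers {H : Type u} [Group H] (hH : IsCapable H)
    {z : H} (hz : IsCommutatorInCentralizers z) : z = 1 := by
  obtain ⟨E, _, ⟨θ⟩⟩ := hH
  exact θ.map_eq_one_iff.mp (eq_one_of_isCommutatorInCentralizers_quotient_center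
    (hz.map θ.toMonoidHom θ.surjective))

end Capable

section CommutatorPairing

variable {G : Type*} [Group G]

theorem commutatorElement_mem_commutator (x y : G) : ⁅x, y⁆ ∈ commutator G :=
  commutator_mem_commutator (mem_top x) (mem_top y)

theorem commutatorElement_mul_left_of_le_center (hG : commutator G ≤ center G) (x x' y : G) :
    ⁅x * x', y⁆ = ⁅x, y⁆ * ⁅x', y⁆ := by
  have hc := mem_center_iff.mp (hG (commutatorElement_mem_commutator x' y))
  rw [commutatorElement_mul_left_eq_conj_mul, hc x, mul_inv_cancel_right, hc]

theorem commutatorElement_mul_right_of_le_center (hG : commutator G ≤ center G) (x y y' : G) :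
    ⁅x, y * y'⁆ = ⁅x, y⁆ * ⁅x, y'⁆ := by
  have hc := mem_center_iff.mp (hG (commutatorElement_mem_commutator x y'))
  rw [commutatorElement_mul_right_eq_mul_conj, mul_assoc _ y, hc y, ← mul_assoc,
    mul_inv_cancel_right]

def commutatorElementHomLeft (hG : commutator G ≤ center G) (y : G) : G →* commutator G where
  toFun x := ⟨⁅x, y⁆, commutatorElement_mem_commutator x y⟩
  map_one' := Subtype.ext (commutatorElement_one_left y)
  map_mul' x x' := Subtype.ext (commutatorElement_mul_left_of_le_center hG x x' y)

def commutatorElementHomRight (hG : commutator G ≤ center G) (x : G) : G →* commutator G where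
  toFun y := ⟨⁅x, y⁆, commutatorElement_mem_commutator x y⟩
  map_one' := Subtype.ext (commutatorElement_one_right x)
  map_mul' y y' := Subtype.ext (commutatorElement_mul_right_of_le_center hG x y y')

variable {R : Type*} [AddGroup R] (χ : commutator G ≃* Multiplicative R)

def commutatorPairing (x y : G) : R :=
  (χ ⟨⁅x, y⁆, commutatorElement_mem_commutator x y⟩).toAdd

theorem commutatorPairing_eq_toAdd_iff {x y g : G} (hg : g ∈ commutator G) :
    commutatorPairing χ x y = (χ ⟨g, hg⟩).toAdd ↔ ⁅x, y⁆ = g := by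
  rw [commutatorPairing, Multiplicative.toAdd.injective.eq_iff, χ.injective.eq_iff,
    Subtype.mk.injEq]

theorem commutatorPairing_eq_zero_iff {x y : G} :
    commutatorPairing χ x y = 0 ↔ Commute x y := by
  have h1 : (χ ⟨1, one_mem _⟩).toAdd = 0 := by
    rw [show (⟨1, one_mem _⟩ : commutator G) = 1 from rfl, map_one, toAdd_one]
  rw [← h1, commutatorPairing_eq_toAdd_iff, commutatorElement_eq_one_iff_commute]

end CommutatorPairing

section Coordinates

variable {G : Type*} [Group G]

theorem exists_toAdd_apply_of {V : Type*} [AddGroup V]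
    (ψ : Abelianization G ≃* Multiplicative V) (v : V) : ∃ x : G, (ψ (.of x)).toAdd = v := by
  obtain ⟨x, hx⟩ := QuotientGroup.mk_surjective (ψ.symm (.ofAdd v))
  exact ⟨x, by rw [show Abelianization.of x = ψ.symm (.ofAdd v) from hx, ψ.apply_symm_apply,
    toAdd_ofAdd]⟩

variable {ι : Type*} [Fintype ι] [DecidableEq ι] {n : ℕ}
  (ψ : Abelianization G ≃* Multiplicative (ι → ZMod n))

theorem AddMonoidHom.apply_eq_dotProduct_zmod (ℓ : (ι → ZMod n) →+ ZMod n) (v : ι → ZMod n) :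
    ℓ v = v ⬝ᵥ fun i => ℓ (Pi.single i 1) := by
  conv_lhs => rw [← Finset.univ_sum_single v]
  refine (map_sum ℓ _ _).trans (Finset.sum_congr rfl fun i _ => ?_)
  rw [← smul_eq_mul, ← ZMod.map_smul, ← Pi.single_smul', smul_eq_mul, mul_one]

theorem MonoidHom.toAdd_apply_eq_dotProduct (h : G →* Multiplicative (ZMod n)) {σ : ι → G}
    (hσ : ∀ i, (ψ (.of (σ i))).toAdd = Pi.single i 1) (y : G) :
    (h y).toAdd = (ψ (.of y)).toAdd ⬝ᵥ fun i => (h (σ i)).toAdd := by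
  let ℓ : (ι → ZMod n) →+ ZMod n :=
    AddMonoidHom.toMultiplicative.symm ((Abelianization.lift h).comp ψ.symm.toMonoidHom)
  have hℓ (x : G) : ℓ (ψ (.of x)).toAdd = (h x).toAdd := by
    show (Abelianization.lift h (ψ.symm (ψ (.of x)))).toAdd = _
    rw [ψ.symm_apply_apply, Abelianization.lift_apply_of]
  simp_rw [← hℓ, hσ]
  exact ℓ.apply_eq_dotProduct_zmod _

theorem commutatorPairing_eq_dotProduct_mulVec (hG : commutator G ≤ center G)
    (χ : commutator G ≃* Multiplicative (ZMod n)) {σ : ι → G}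
    (hσ : ∀ i, (ψ (.of (σ i))).toAdd = Pi.single i 1) (x y : G) :
    commutatorPairing χ x y = (ψ (.of x)).toAdd ⬝ᵥ
      (Matrix.of fun i j => commutatorPairing χ (σ i) (σ j)) *ᵥ (ψ (.of y)).toAdd := by
  -- expand in `x`, then expand each coefficient `commutatorPairing χ (σ i) y` in `y`
  refine ((χ.toMonoidHom.comp (commutatorElementHomLeft hG y)).toAdd_apply_eq_dotProduct ψ hσ
    x).trans (congrArg _ (funext fun i => ?_))
  exact ((χ.toMonoidHom.comp (commutatorElementHomRight hG (σ i))).toAdd_apply_eq_dotProduct ψ hσ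
    y).trans (dotProduct_comm _ _)

end Coordinates

section SExtraspecial

variable {G : Type*} [Group G] {ι : Type*} [Fintype ι] [DecidableEq ι] {n : ℕ} [NeZero n]

theorem isUnit_commutatorPairing_matrix (ψ : Abelianization G ≃* Multiplicative (ι → ZMod n))
    (χ : commutator G ≃* Multiplicative (ZMod n)) (hcz : commutator G = center G) {σ : ι → G}
    (hσ : ∀ i, (ψ (.of (σ i))).toAdd = Pi.single i 1) :
    IsUnit (Matrix.of fun i j => commutatorPairing χ (σ i) (σ j)) := by
  rw [← mulVec_surjective_iff_isUnit, ← Finite.injective_iff_surjective]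
  refine (injective_iff_map_eq_zero (Matrix.of _).mulVecLin).mpr fun v hv => ?_
  obtain ⟨y, rfl⟩ := exists_toAdd_apply_of ψ v
  have hy (x : G) : Commute x y := (commutatorPairing_eq_zero_iff χ).mp <| by
    rw [commutatorPairing_eq_dotProduct_mulVec ψ hcz.le χ hσ, ← mulVecLin_apply, hv,
      dotProduct_zero]
  have hy' : y ∈ commutator G := hcz ▸ mem_center_iff.mpr fun x => (hy x).eq
  rw [← Abelianization.ker_of, MonoidHom.mem_ker] at hy'
  rw [hy', map_one, toAdd_one]

theorem isCommutatorInCentralizers_of_mem_commutator [PreValuationRing (ZMod n)]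
    (ψ : Abelianization G ≃* Multiplicative (ι → ZMod n))
    (χ : commutator G ≃* Multiplicative (ZMod n)) (hcz : commutator G = center G)
    (hι : 2 < Fintype.card ι) {g : G} (hg : g ∈ commutator G) :
    IsCommutatorInCentralizers g := by
  choose σ hσ using fun i => exists_toAdd_apply_of ψ (Pi.single i (1 : ZMod n))
  intro y
  obtain ⟨u, v, hu, hv, huv⟩ := exists_dotProduct_mulVec_eq hι
    (isUnit_commutatorPairing_matrix ψ χ hcz hσ) (ψ (.of y)).toAdd (χ ⟨g, hg⟩).toAdd
  obtain ⟨a, rfl⟩ := exists_toAdd_apply_of ψ u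
  obtain ⟨b, rfl⟩ := exists_toAdd_apply_of ψ v
  simp only [← commutatorPairing_eq_dotProduct_mulVec ψ hcz.le χ hσ] at hu hv huv
  exact ⟨a, b, (commutatorPairing_eq_zero_iff χ).mp hu, (commutatorPairing_eq_zero_iff χ).mp hv,
    (commutatorPairing_eq_toAdd_iff χ hg).mp huv⟩

end SExtraspecial

theorem eq_two_mul_of_card_eq {p s r k : ℕ} (hp : p.Prime) (hs : 1 ≤ s) {G : Type*} [Group G]
    (hcards : Nat.card (commutator G) = p ^ s)
    (ψ : Abelianization G ≃* Multiplicative (Fin k → ZMod (p ^ s)))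
    (hcard : Nat.card G = p ^ ((2 * r + 1) * s)) : k = 2 * r := by
  have : NeZero p := ⟨hp.ne_zero⟩
  have h := (commutator G).card_eq_card_quotient_mul_card_subgroup
  change _ = Nat.card (Abelianization G) * _ at h
  rw [hcard, hcards, Nat.card_congr ψ.toEquiv, Nat.card_eq_fintype_card] at h
  simp only [Fintype.card_multiplicative, Fintype.card_pi, ZMod.card, Finset.prod_const,
    Finset.card_univ, Fintype.card_fin, ← pow_mul, ← pow_add] at h
  have h : (2 * r + 1) * s = s * k + s := Nat.pow_right_injective hp.two_le h
  exact Nat.eq_of_mul_eq_mul_left hs (by linarith)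

theorem sExtraspecial_unicentral_general {p s r : ℕ} (hp : p.Prime)
    (hs : 1 ≤ s) (hr : 2 ≤ r) {G : Type} [Group G]
    (hG : IsSExtraspecial p s G) (hcard : Nat.card G = p ^ ((2 * r + 1) * s)) :
    epicenter G = Subgroup.center G ∧ ¬ IsCapable G := by
  obtain ⟨hcz, hcyc, hcards, k, ⟨ψ⟩⟩ := hG
  have : Fact p.Prime := ⟨hp⟩
  have hk : 2 < Fintype.card (Fin k) := by
    rw [Fintype.card_fin, eq_two_mul_of_card_eq hp hs hcards ψ hcard]
    omega
  have χ : commutator G ≃* Multiplicative (ZMod (p ^ s)) := mulEquivOfCyclicCardEq <| by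
    rw [hcards, Nat.card_eq_fintype_card, Fintype.card_multiplicative, ZMod.card]
  have hgen {g : G} (hg : g ∈ commutator G) : IsCommutatorInCentralizers g :=
    isCommutatorInCentralizers_of_mem_commutator ψ χ hcz hk hg
  refine ⟨le_antisymm (sInf_le ⟨inferInstance, le_rfl, G, _, ⟨.refl _⟩⟩) ?_, fun hcap => ?_⟩
  · refine le_sInf fun Z ⟨_, _, hcap⟩ g hg => (QuotientGroup.eq_one_iff g).mp ?_
    exact hcap.eq_one_of_isCommutatorInCentralizers
      ((hgen (hcz ▸ hg)).map (QuotientGroup.mk' Z) (QuotientGroup.mk'_surjective Z))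
  · have hbot : commutator G = ⊥ :=
      (eq_bot_iff_forall _).mpr fun g hg => hcap.eq_one_of_isCommutatorInCentralizers (hgen hg)
    rw [hbot, card_bot] at hcards
    exact (Nat.one_lt_pow (by omega) hp.one_lt).ne hcards

/-- Let `p` be odd and `G` an `s`-extraspecial `p`-group of order `p^((2r+1)s)` with
`r ≥ 2`.  Then `G` is unicentral (`Z^*(G) = Z(G)`); consequently `G` is not capable. -/
theorem sExtraspecial_unicentral {p s r : ℕ} (hp : p.Prime) (hodd : Odd p)
    (hs : 1 ≤ s) (hr : 2 ≤ r) {G : Type} [Group G] [Finite G] (hpG : IsPGroup p G)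
    (hG : IsSExtraspecial p s G) (hcard : Nat.card G = p ^ ((2 * r + 1) * s)) :
    epicenter G = Subgroup.center G ∧ ¬ IsCapable G :=
  sExtraspecial_unicentral_general hp hs hr hG hcard
end
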